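/- arXiv:1309.3713 — 8 statements merged into one kernel-verified Lean document; each statement's English description precedes it below -/
import Mathlib

section
/- Assume the axioms BA, AxColl₃, Ax∀inecoll⁻, AxMass and AxThEx⁻ (i.e. DYN without AxSpd⁻). Suppose k, h are inertial observers and b is an inertial particle satisfying v_k(b) < ∞, v_h(b) < ∞, v_k(h) < ∞ and v_h(k) < ∞. Then m_k(b) = 0 if and only if m_h(b) = 0. -/
open scoped Classical

noncomputable section

/-! Framework for axiomatic relativistic/Newtonian dynamics
(Madarász–Stannett–Székely).  `Q⁴` is modelled as `Fin 4 → Q` with the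
time component at index `0` and space components at indices `1,2,3`;
`Q³` is `Fin 3 → Q`. -/

/-- `AxEField`: every nonnegative element of `Q` has a square root
(`Q` being a linearly ordered field). -/
def AxEField (Q : Type*) [Field Q] [LinearOrder Q] [IsStrictOrderedRing Q] : Prop :=
  ∀ x : Q, 0 ≤ x → ∃ y : Q, y ^ 2 = x

/-- The nonnegative square root of `x`, when it exists (junk value `0` otherwise).
In a Euclidean field this is the usual square root function `√`. -/
def esqrt {Q : Type*} [Field Q] [LinearOrder Q] [IsStrictOrderedRing Q] (x : Q) : Q :=
  if h : ∃ y : Q, 0 ≤ y ∧ y ^ 2 = x then h.choose else 0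

/-- Squared Euclidean norm on `Q³`. -/
def normSq3 {Q : Type*} [Field Q] [LinearOrder Q] [IsStrictOrderedRing Q] (u : Fin 3 → Q) : Q :=
  u 0 ^ 2 + u 1 ^ 2 + u 2 ^ 2

/-- Euclidean norm (length) on `Q³`. -/
def enorm3 {Q : Type*} [Field Q] [LinearOrder Q] [IsStrictOrderedRing Q] (u : Fin 3 → Q) : Q :=
  esqrt (normSq3 u)

/-- The Minkowski norm `‖x‖_M = √|x₁² − x₂² − x₃² − x₄²|` on `Q⁴`. -/
def minkNorm {Q : Type*} [Field Q] [LinearOrder Q] [IsStrictOrderedRing Q] (x : Fin 4 → Q) : Q :=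
  esqrt |x 0 ^ 2 - x 1 ^ 2 - x 2 ^ 2 - x 3 ^ 2|

/-- The straight line of `Q⁴` through two (distinct) points. -/
def lineThrough {Q : Type*} [Field Q] [LinearOrder Q] [IsStrictOrderedRing Q] (x y : Fin 4 → Q) :
    Set (Fin 4 → Q) :=
  {z | ∃ q : Q, z = x + q • (y - x)}

/-- `f : Q⁴ → Q⁴` is an affine transformation. -/
def IsAffine {Q : Type*} [Field Q] [LinearOrder Q] [IsStrictOrderedRing Q]
    (f : (Fin 4 → Q) → (Fin 4 → Q)) : Prop :=
  ∃ L : (Fin 4 → Q) →ₗ[Q] (Fin 4 → Q), ∀ x, f x = L x + f 0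

/-- `u ⪯ w` : `u` and `w` point in the same direction and `u` is no longer
than `w`. -/
def vecLe {Q : Type*} [Field Q] [LinearOrder Q] [IsStrictOrderedRing Q] (u w : Fin 3 → Q) : Prop :=
  ∃ l : Q, 0 ≤ l ∧ l ≤ 1 ∧ u = l • w

/-- A kinematic/dynamic frame: bodies `B` with distinguished inertial
observers, inertial particles and photons; world-lines, world-view
transformations and relativistic masses. -/
structure Frame (Q : Type*) (B : Type*) where
  /-- inertial observers -/
  IOb : Set B
  /-- inertial particles -/
  Ip : Set B
  /-- photons -/
  Ph : Set B
  /-- `wl k b` : the world-line of body `b` according to observer `k` -/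
  wl : B → B → Set (Fin 4 → Q)
  /-- `w k h` : the world-view transformation from `k`'s world-view to `h`'s -/
  w : B → B → (Fin 4 → Q) → (Fin 4 → Q)
  /-- `m k b` : the relativistic mass of `b` according to `k` -/
  m : B → B → Q

namespace Frame

variable {Q : Type*} [Field Q] [LinearOrder Q] [IsStrictOrderedRing Q] {B : Type*} (F : Frame Q B)

/-- `v_k(b) < ∞` : the world-line of `b` according to `k` contains no two
distinct points with equal time components. -/
def finite (k b : B) : Prop :=
  ∀ x ∈ F.wl k b, ∀ y ∈ F.wl k b, x ≠ y → x 0 ≠ y 0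

/-- The velocity `v⃗_k(b) ∈ Q³` computed from any two points of the world-line
with distinct time components (junk value `0` if there are none). -/
def vvec (k b : B) : Fin 3 → Q :=
  if h : ∃ x, x ∈ F.wl k b ∧ ∃ y, y ∈ F.wl k b ∧ x 0 ≠ y 0 then
    fun i => (h.choose i.succ - h.choose_spec.2.choose i.succ) /
      (h.choose 0 - h.choose_spec.2.choose 0)
  else 0

/-- The speed `v_k(b) ∈ Q`. -/
def speed (k b : B) : Q := enorm3 (F.vvec k b)

/-- The linear momentum `p⃗_k(b) = m_k(b) · v⃗_k(b) ∈ Q³`. -/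
def mom (k b : B) : Fin 3 → Q := F.m k b • F.vvec k b

/-- The four-momentum `P_k(b) = (m_k(b), p⃗_k(b)) ∈ Q⁴`. -/
def fourMom (k b : B) : Fin 4 → Q := Fin.cons (F.m k b) (F.mom k b)

/-- `b` is incoming at `x` according to `k`. -/
def incomingAt (k b : B) (x : Fin 4 → Q) : Prop :=
  x ∈ F.wl k b ∧ F.finite k b ∧ ∀ y ∈ F.wl k b, y ≠ x → y 0 < x 0

/-- `b` is outgoing at `x` according to `k`. -/
def outgoingAt (k b : B) (x : Fin 4 → Q) : Prop :=
  x ∈ F.wl k b ∧ F.finite k b ∧ ∀ y ∈ F.wl k b, y ≠ x → x 0 < y 0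

/-- `in_k(b)` : `b` is incoming at some point according to `k`. -/
def incoming (k b : B) : Prop := ∃ x, F.incomingAt k b x

/-- `out_k(b)` : `b` is outgoing at some point according to `k`. -/
def outgoing (k b : B) : Prop := ∃ x, F.outgoingAt k b x

/-- `coll_k(abc)` : the particles `a`, `b`, `c` form a collision according
to `k` : at some point `x` each of them is incoming or outgoing, and the sum
of the four-momenta of the incoming particles equals that of the outgoing
ones. -/
def coll3 (k a b c : B) : Prop :=
  ∃ x : Fin 4 → Q,
    (F.incomingAt k a x ∨ F.outgoingAt k a x) ∧
    (F.incomingAt k b x ∨ F.outgoingAt k b x) ∧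
    (F.incomingAt k c x ∨ F.outgoingAt k c x) ∧
    ((if F.incomingAt k a x then F.fourMom k a else 0) +
     (if F.incomingAt k b x then F.fourMom k b else 0) +
     (if F.incomingAt k c x then F.fourMom k c else 0) =
     (if F.outgoingAt k a x then F.fourMom k a else 0) +
     (if F.outgoingAt k b x then F.fourMom k b else 0) +
     (if F.outgoingAt k c x then F.fourMom k c else 0))

/-- `a` and `b` collide inelastically according to `k`. -/
def inelastic (k a b : B) : Prop :=
  ∃ c, c ∈ F.Ip ∧ F.coll3 k a b c ∧
    F.incoming k a ∧ F.incoming k b ∧ F.outgoing k c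

/-- `A_k(b)` : the four-momentum of `b` signed according to whether `b` is
incoming (`+P_k(b)`) or outgoing (`−P_k(b)`) for `k`. -/
def signedMom (k b : B) : Fin 4 → Q :=
  if F.incoming k b then F.fourMom k b else -(F.fourMom k b)

/-- `AxL` : world-lines of inertial particles and inertial observers are
subsets of straight lines and contain at least two points. -/
def AxL : Prop :=
  ∀ k ∈ F.IOb, ∀ b ∈ F.Ip ∪ F.IOb,
    (∃ x y : Fin 4 → Q, x ≠ y ∧ F.wl k b ⊆ lineThrough x y) ∧
    (∃ x ∈ F.wl k b, ∃ y ∈ F.wl k b, x ≠ y)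

/-- `AxW` : world-view transformations are bijective affine transformations
mapping world-lines to world-lines. -/
def AxW : Prop :=
  ∀ k ∈ F.IOb, ∀ h ∈ F.IOb,
    Function.Bijective (F.w k h) ∧ IsAffine (F.w k h) ∧
    ∀ b : B, F.w k h '' F.wl k b = F.wl h b

/-- `AxSelf⁻` : inertial observers are stationary in their own coordinate
systems. -/
def AxSelf : Prop :=
  ∀ k ∈ F.IOb, ∀ x ∈ F.wl k k, x 1 = 0 ∧ x 2 = 0 ∧ x 3 = 0

/-- The basic axiom system `BA`. -/
def BA : Prop := AxEField Q ∧ F.AxL ∧ F.AxW ∧ F.AxSelf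

/-- `AxColl₃`. -/
def AxColl3 : Prop :=
  ∀ k ∈ F.IOb, ∀ h ∈ F.IOb, ∀ a ∈ F.Ip, ∀ b ∈ F.Ip, ∀ c ∈ F.Ip,
    F.coll3 k a b c → F.finite h a → F.finite h b → F.finite h c →
      F.coll3 h a b c

/-- `Ax∀inecoll⁻`. -/
def AxInecoll : Prop :=
  ∀ k ∈ F.IOb, ∀ a ∈ F.Ip, ∀ b ∈ F.Ip,
    F.finite k a → F.finite k b → F.m k a + F.m k b ≠ 0 →
      ∃ a' ∈ F.Ip, ∃ b' ∈ F.Ip,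
        F.fourMom k a' = F.fourMom k a ∧ F.fourMom k b' = F.fourMom k b ∧
        F.inelastic k a' b'

/-- `AxSpd⁻`. -/
def AxSpd : Prop :=
  ∀ k ∈ F.IOb, ∀ h ∈ F.IOb, ∀ b ∈ F.Ip,
    vecLe (F.vvec k b) (F.vvec k h) → F.speed k b = F.speed h b →
      F.m k b = F.m h b

/-- `AxMass`. -/
def AxMass : Prop :=
  ∀ k ∈ F.IOb, ∀ h ∈ F.IOb, ∀ a ∈ F.Ip, ∀ b ∈ F.Ip,
    F.fourMom k a = F.fourMom k b → F.m h a = F.m h b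

/-- `AxThEx⁻`. -/
def AxThEx : Prop :=
  ∀ k ∈ F.IOb, ∀ h ∈ F.IOb, ∀ u : Fin 3 → Q,
    vecLe u (F.vvec k h) →
      ∃ b ∈ F.Ip, F.vvec k b = u ∧ F.m k b ≠ 0

/-- The axiom system `DYN` for dynamics. -/
def DYN : Prop :=
  F.BA ∧ F.AxColl3 ∧ F.AxInecoll ∧ F.AxSpd ∧ F.AxMass ∧ F.AxThEx

/-- `AxPh` : the light axiom. -/
def AxPh : Prop :=
  ∀ k ∈ F.IOb, ∀ x y : Fin 4 → Q,
    (∃ p ∈ F.Ph, x ∈ F.wl k p ∧ y ∈ F.wl k p) ↔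
      (x 1 - y 1) ^ 2 + (x 2 - y 2) ^ 2 + (x 3 - y 3) ^ 2 = (x 0 - y 0) ^ 2

/-- `AxAbsSim` : absolute simultaneity. -/
def AxAbsSim : Prop :=
  ∀ k ∈ F.IOb, ∀ h ∈ F.IOb, ∀ x y : Fin 4 → Q,
    (F.w k h x) 0 = (F.w k h y) 0 ↔ x 0 = y 0

end Frame

/-!
Suppose `m_k(b) = 0` but `m_h(b) = μ ≠ 0`. By `Ax∀inecoll⁻` there are copies `b₁, b₂` of `b`
(same four-momentum for `h`) colliding inelastically for `h` at some event `x`; by `AxMass` both are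
massless for `k`. A world-view transformation is affine, so it rescales the time differences along
the parallel world-lines of `b, b₁, b₂` by one common factor, which is nonzero because `b` has finite
speed for `k`. Hence `b₁, b₁, b₂` are all incoming or outgoing at `w_{hk}(x)` for `k`, and since their
four-momenta vanish there, they form a collision for `k`. By `AxColl₃` they form a collision for `h`
too, where the time components give `±2μ ± μ = 0`, so `μ = 0`.
-/

lemma sub_eq_smul_of_mem_lineThrough {Q : Type*} [Field Q] [LinearOrder Q] [IsStrictOrderedRing Q]
    {u₀ u₁ z z' : Fin 4 → Q} (hz : z ∈ lineThrough u₀ u₁) (hz' : z' ∈ lineThrough u₀ u₁) :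
    ∃ t : Q, z - z' = t • (u₁ - u₀) := by
  obtain ⟨s, rfl⟩ := hz
  obtain ⟨s', rfl⟩ := hz'
  exact ⟨s - s', by rw [sub_smul]; abel⟩

lemma IsAffine.exists_linearMap_sub {Q : Type*} [Field Q] [LinearOrder Q] [IsStrictOrderedRing Q]
    {f : (Fin 4 → Q) → (Fin 4 → Q)} (hf : IsAffine f) :
    ∃ L : (Fin 4 → Q) →ₗ[Q] (Fin 4 → Q), ∀ u v, f u - f v = L (u - v) := by
  obtain ⟨L, hL⟩ := hf
  exact ⟨L, fun u v => by rw [hL u, hL v, map_sub]; abel⟩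

namespace Frame

variable {Q B : Type*}

def tangent [Field Q] (F : Frame Q B) (k b : B) : Fin 4 → Q := Fin.cons 1 (F.vvec k b)

variable {F : Frame Q B}

section Field

variable [Field Q]

lemma exists_vvec_eq {k b : B} (h : ∃ x ∈ F.wl k b, ∃ y ∈ F.wl k b, x 0 ≠ y 0) :
    ∃ x ∈ F.wl k b, ∃ y ∈ F.wl k b, x 0 ≠ y 0 ∧
      ∀ i, F.vvec k b i = (x i.succ - y i.succ) / (x 0 - y 0) :=
  ⟨h.choose, h.choose_spec.1, h.choose_spec.2.choose, h.choose_spec.2.choose_spec.1,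
    h.choose_spec.2.choose_spec.2, fun _ => by rw [vvec, dif_pos h]⟩

lemma fourMom_eq_zero {k b : B} (h : F.m k b = 0) : F.fourMom k b = 0 := by
  funext i
  refine Fin.cases ?_ (fun j => ?_) i <;> simp [fourMom, mom, h]

lemma m_eq_of_fourMom_eq {k a b : B} (hP : F.fourMom k a = F.fourMom k b) : F.m k a = F.m k b :=
  congrFun hP 0

lemma vvec_eq_of_fourMom_eq {k a b : B} (hP : F.fourMom k a = F.fourMom k b) (hm : F.m k b ≠ 0) :
    F.vvec k a = F.vvec k b := by
  funext i
  have hi := congrFun hP i.succ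
  simp only [fourMom, Fin.cons_succ, mom, Pi.smul_apply, smul_eq_mul, m_eq_of_fourMom_eq hP] at hi
  exact mul_left_cancel₀ hm hi

end Field

lemma not_outgoingAt_of_incomingAt [LinearOrder Q] {k b : B} {x : Fin 4 → Q}
    (htwo : ∃ r ∈ F.wl k b, ∃ s ∈ F.wl k b, r ≠ s) (hin : F.incomingAt k b x) :
    ¬ F.outgoingAt k b x := by
  rintro hout
  obtain ⟨r, hr, s, hs, hrs⟩ := htwo
  obtain ⟨y, hy, hyx⟩ : ∃ y ∈ F.wl k b, y ≠ x := by
    by_cases hrx : r = x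
    · exact ⟨s, hs, fun e => hrs (hrx.trans e.symm)⟩
    · exact ⟨r, hr, hrx⟩
  exact lt_asymm (hin.2.2 y hy hyx) (hout.2.2 y hy hyx)

lemma finite_of_incomingAt_or_outgoingAt [LinearOrder Q] {k b : B} {x : Fin 4 → Q}
    (hx : F.incomingAt k b x ∨ F.outgoingAt k b x) : F.finite k b :=
  hx.elim (·.2.1) (·.2.1)

variable [Field Q] [LinearOrder Q]

lemma coll3_of_m_eq_zero {k a c : B} {x : Fin 4 → Q}
    (ha : F.incomingAt k a x ∨ F.outgoingAt k a x) (hc : F.incomingAt k c x ∨ F.outgoingAt k c x)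
    (hma : F.m k a = 0) (hmc : F.m k c = 0) : F.coll3 k a a c :=
  ⟨x, ha, ha, hc, by simp [fourMom_eq_zero hma, fourMom_eq_zero hmc]⟩

lemma time_ite_sub_eq {k b : B} {x : Fin 4 → Q}
    (htwo : ∃ r ∈ F.wl k b, ∃ s ∈ F.wl k b, r ≠ s)
    (hx : F.incomingAt k b x ∨ F.outgoingAt k b x) :
    (if F.incomingAt k b x then F.fourMom k b else 0) 0 -
        (if F.outgoingAt k b x then F.fourMom k b else 0) 0 = F.m k b ∨
      (if F.incomingAt k b x then F.fourMom k b else 0) 0 -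
        (if F.outgoingAt k b x then F.fourMom k b else 0) 0 = -F.m k b := by
  rcases hx with hin | hout
  · left
    simp [hin, not_outgoingAt_of_incomingAt htwo hin, fourMom]
  · right
    have hin : ¬ F.incomingAt k b x := fun hin => not_outgoingAt_of_incomingAt htwo hin hout
    simp [hin, hout, fourMom]

variable [IsStrictOrderedRing Q]

/-- The time components of a collision of `a, a, c` with `m_k(a) = m_k(c)` read `±2μ ± μ = 0`. -/
lemma m_eq_zero_of_coll3 {k a c : B}
    (hta : ∃ r ∈ F.wl k a, ∃ s ∈ F.wl k a, r ≠ s) (htc : ∃ r ∈ F.wl k c, ∃ s ∈ F.wl k c, r ≠ s)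
    (hm : F.m k a = F.m k c) (hcoll : F.coll3 k a a c) : F.m k a = 0 := by
  obtain ⟨x, hxa, -, hxc, hsum⟩ := hcoll
  have htime := congrFun hsum 0
  simp only [Pi.add_apply] at htime
  rcases time_ite_sub_eq hta hxa with ha | ha <;> rcases time_ite_sub_eq htc hxc with hc | hc <;>
    linarith

lemma sub_eq_smul_tangent {k b : B} {u₀ u₁ p q : Fin 4 → Q}
    (hline : F.wl k b ⊆ lineThrough u₀ u₁) (hfin : F.finite k b)
    (hp : p ∈ F.wl k b) (hq : q ∈ F.wl k b) :
    p - q = (p 0 - q 0) • F.tangent k b := by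
  rcases eq_or_ne p q with rfl | hpq
  · simp
  obtain ⟨x, hx, y, hy, hxy, hv⟩ := exists_vvec_eq ⟨p, hp, q, hq, hfin p hp q hq hpq⟩
  obtain ⟨t, hpq⟩ := sub_eq_smul_of_mem_lineThrough (hline hp) (hline hq)
  obtain ⟨s, hxy'⟩ := sub_eq_smul_of_mem_lineThrough (hline hx) (hline hy)
  have hxy0 := congrFun hxy' 0
  simp only [Pi.sub_apply, Pi.smul_apply, smul_eq_mul] at hxy0
  have hs : s ≠ 0 := by rintro rfl; exact hxy (sub_eq_zero.mp (by simpa using hxy0))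
  have hd : u₁ 0 - u₀ 0 ≠ 0 := by rintro hd; exact hxy (sub_eq_zero.mp (by simpa [hd] using hxy0))
  funext i
  refine Fin.cases ?_ (fun j => ?_) i
  · simp [tangent]
  · have hpq_i := fun i => congrFun hpq i
    have hxy_i := fun i => congrFun hxy' i
    simp only [Pi.sub_apply, Pi.smul_apply, smul_eq_mul] at hpq_i hxy_i ⊢
    simp only [tangent, Fin.cons_succ, hv j, hpq_i, hxy_i]
    field_simp

section WorldView

variable {f : (Fin 4 → Q) → (Fin 4 → Q)} {L : (Fin 4 → Q) →ₗ[Q] (Fin 4 → Q)}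
  {h k a : B} {u₀ u₁ : Fin 4 → Q}

lemma image_time_sub (hfL : ∀ u v, f u - f v = L (u - v))
    (hline : F.wl h a ⊆ lineThrough u₀ u₁) (hfin : F.finite h a)
    {p q : Fin 4 → Q} (hp : p ∈ F.wl h a) (hq : q ∈ F.wl h a) :
    f p 0 - f q 0 = (p 0 - q 0) * L (F.tangent h a) 0 := by
  rw [← Pi.sub_apply, hfL, sub_eq_smul_tangent hline hfin hp hq, map_smul]
  rfl

lemma time_scale_ne_zero (hfL : ∀ u v, f u - f v = L (u - v))
    (hline : F.wl h a ⊆ lineThrough u₀ u₁) (hfin : F.finite h a)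
    (hinj : Function.Injective f) (himg : f '' F.wl h a = F.wl k a)
    (htwo : ∃ r ∈ F.wl h a, ∃ s ∈ F.wl h a, r ≠ s) (hfin' : F.finite k a) :
    L (F.tangent h a) 0 ≠ 0 := by
  obtain ⟨r, hr, s, hs, hrs⟩ := htwo
  intro hc
  have hrs' := image_time_sub hfL hline hfin hr hs
  rw [hc, mul_zero, sub_eq_zero] at hrs'
  exact hfin' _ (himg ▸ ⟨r, hr, rfl⟩) _ (himg ▸ ⟨s, hs, rfl⟩) (hinj.ne hrs) hrs'

lemma finite_of_time_scale_ne_zero (hfL : ∀ u v, f u - f v = L (u - v))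
    (hline : F.wl h a ⊆ lineThrough u₀ u₁) (hfin : F.finite h a)
    (himg : f '' F.wl h a = F.wl k a) (hc : L (F.tangent h a) 0 ≠ 0) :
    F.finite k a := by
  rw [finite, ← himg]
  rintro _ ⟨p, hp, rfl⟩ _ ⟨q, hq, rfl⟩ hpq
  have hpq0 : p 0 - q 0 ≠ 0 := sub_ne_zero.mpr (hfin p hp q hq fun e => hpq (e ▸ rfl))
  rw [← sub_ne_zero, image_time_sub hfL hline hfin hp hq]
  exact mul_ne_zero hpq0 hc

/-- A negative time scale swaps incoming and outgoing, so only the disjunction is preserved. -/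
lemma incomingAt_or_outgoingAt_image (hfL : ∀ u v, f u - f v = L (u - v))
    (hline : F.wl h a ⊆ lineThrough u₀ u₁) (hfin : F.finite h a)
    (himg : f '' F.wl h a = F.wl k a) (hc : L (F.tangent h a) 0 ≠ 0) {x : Fin 4 → Q}
    (hx : F.incomingAt h a x ∨ F.outgoingAt h a x) :
    F.incomingAt k a (f x) ∨ F.outgoingAt k a (f x) := by
  have hxa : x ∈ F.wl h a := hx.elim (·.1) (·.1)
  have hfx : f x ∈ F.wl k a := himg ▸ ⟨x, hxa, rfl⟩
  have hfin' := finite_of_time_scale_ne_zero hfL hline hfin himg hc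
  have hshift : ∀ z ∈ F.wl k a, z ≠ f x →
      ∃ p ∈ F.wl h a, p ≠ x ∧ z 0 - f x 0 = (p 0 - x 0) * L (F.tangent h a) 0 := by
    rw [← himg]
    rintro _ ⟨p, hp, rfl⟩ hpx
    exact ⟨p, hp, fun e => hpx (e ▸ rfl), image_time_sub hfL hline hfin hp hxa⟩
  rcases hc.lt_or_gt with hc | hc <;> rcases hx with hx | hx
  · refine .inr ⟨hfx, hfin', fun z hz hzx => ?_⟩
    obtain ⟨p, hp, hpx, hzp⟩ := hshift z hz hzx
    nlinarith [hx.2.2 p hp hpx]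
  · refine .inl ⟨hfx, hfin', fun z hz hzx => ?_⟩
    obtain ⟨p, hp, hpx, hzp⟩ := hshift z hz hzx
    nlinarith [hx.2.2 p hp hpx]
  · refine .inl ⟨hfx, hfin', fun z hz hzx => ?_⟩
    obtain ⟨p, hp, hpx, hzp⟩ := hshift z hz hzx
    nlinarith [hx.2.2 p hp hpx]
  · refine .inr ⟨hfx, hfin', fun z hz hzx => ?_⟩
    obtain ⟨p, hp, hpx, hzp⟩ := hshift z hz hzx
    nlinarith [hx.2.2 p hp hpx]

end WorldView

lemma m_eq_zero_of_m_eq_zero (hBA : F.BA) (hColl : F.AxColl3) (hIne : F.AxInecoll)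
    (hMass : F.AxMass) {k h b : B} (hk : k ∈ F.IOb) (hh : h ∈ F.IOb) (hb : b ∈ F.Ip)
    (hfkb : F.finite k b) (hfhb : F.finite h b) (h0 : F.m k b = 0) : F.m h b = 0 := by
  by_contra hμ
  obtain ⟨-, hL, hW, -⟩ := hBA
  obtain ⟨hbij, hAff, himg⟩ := hW h hh k hk
  obtain ⟨L, hfL⟩ := hAff.exists_linearMap_sub
  obtain ⟨b₁, hb₁, b₂, hb₂, hP₁, hP₂, _, -, ⟨x, hx₁, hx₂, -⟩, -⟩ :=
    hIne h hh b hb b hb hfhb hfhb fun e => hμ (by linarith)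
  obtain ⟨⟨_, _, -, hline⟩, htwo⟩ := hL h hh b (.inl hb)
  have hc : L (F.tangent h b) 0 ≠ 0 :=
    time_scale_ne_zero hfL hline hfhb hbij.injective (himg b) htwo hfkb
  have transfer : ∀ {b'}, b' ∈ F.Ip → F.fourMom h b' = F.fourMom h b →
      (F.incomingAt h b' x ∨ F.outgoingAt h b' x) →
      F.m k b' = 0 ∧ (F.incomingAt k b' (F.w h k x) ∨ F.outgoingAt k b' (F.w h k x)) := by
    intro b' hb' hP hx
    obtain ⟨⟨_, _, -, hline'⟩, -⟩ := hL h hh b' (.inl hb')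
    have htangent : F.tangent h b' = F.tangent h b := by
      rw [tangent, tangent, vvec_eq_of_fourMom_eq hP hμ]
    refine ⟨(hMass h hh k hk b' hb' b hb hP).trans h0, ?_⟩
    exact incomingAt_or_outgoingAt_image hfL hline' (finite_of_incomingAt_or_outgoingAt hx)
      (himg b') (htangent ▸ hc) hx
  obtain ⟨hm₁, hx₁'⟩ := transfer hb₁ hP₁ hx₁
  obtain ⟨hm₂, hx₂'⟩ := transfer hb₂ hP₂ hx₂
  have hcoll := hColl k hk h hh b₁ hb₁ b₁ hb₁ b₂ hb₂ (coll3_of_m_eq_zero hx₁' hx₂' hm₁ hm₂)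
    (finite_of_incomingAt_or_outgoingAt hx₁) (finite_of_incomingAt_or_outgoingAt hx₁)
    (finite_of_incomingAt_or_outgoingAt hx₂)
  refine hμ ?_
  rw [← m_eq_of_fourMom_eq hP₁]
  exact m_eq_zero_of_coll3 (hL h hh b₁ (.inl hb₁)).2 (hL h hh b₂ (.inl hb₂)).2
    ((m_eq_of_fourMom_eq hP₁).trans (m_eq_of_fourMom_eq hP₂).symm) hcoll

end Frame

theorem massless_iff_general
    {Q : Type*} [Field Q] [LinearOrder Q] [IsStrictOrderedRing Q] {B : Type*} (F : Frame Q B)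
    (hBA : F.BA) (hColl : F.AxColl3) (hIne : F.AxInecoll)
    (hMass : F.AxMass)
    (k h : B) (hk : k ∈ F.IOb) (hh : h ∈ F.IOb) (b : B) (hb : b ∈ F.Ip)
    (hfkb : F.finite k b) (hfhb : F.finite h b) :
    F.m k b = 0 ↔ F.m h b = 0 :=
  ⟨Frame.m_eq_zero_of_m_eq_zero hBA hColl hIne hMass hk hh hb hfkb hfhb,
    Frame.m_eq_zero_of_m_eq_zero hBA hColl hIne hMass hh hk hb hfhb hfkb⟩

/-- **Lemma 1 (massless particles).**  Assume `BA`, `AxColl₃`, `Ax∀inecoll⁻`,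
`AxMass` and `AxThEx⁻` (i.e. `DYN` without `AxSpd⁻`).  If `k`, `h` are inertial
observers and `b` an inertial particle with `v_k(b) < ∞`, `v_h(b) < ∞`,
`v_k(h) < ∞` and `v_h(k) < ∞`, then `m_k(b) = 0 ↔ m_h(b) = 0`. -/
theorem massless_iff
    {Q : Type*} [Field Q] [LinearOrder Q] [IsStrictOrderedRing Q] {B : Type*} (F : Frame Q B)
    (hBA : F.BA) (hColl : F.AxColl3) (hIne : F.AxInecoll)
    (hMass : F.AxMass) (hThEx : F.AxThEx)
    (k h : B) (hk : k ∈ F.IOb) (hh : h ∈ F.IOb) (b : B) (hb : b ∈ F.Ip)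
    (hfkb : F.finite k b) (hfhb : F.finite h b)
    (hfkh : F.finite k h) (hfhk : F.finite h k) :
    F.m k b = 0 ↔ F.m h b = 0 :=
  massless_iff_general F hBA hColl hIne hMass k h hk hh b hb hfkb hfhb
end
end

section
/- Assume the axioms BA and AxPh, and let k, h be inertial observers. Then there exist q ∈ Q with q > 0 and a Lorentz transformation L : Q⁴ → Q⁴ such that w_{kh}(x) − w_{kh}(0) = q·L(x) for all x ∈ Q⁴. -/
open scoped Classical

noncomputable section

/-! The linear part `M` of `w_{kh}` maps lightlike vectors to lightlike vectors, since photons go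
to photons. Polarizing the Minkowski form on the lightlike vectors `e₀ ± eᵢ` and
`√2 e₀ + eᵢ + eⱼ` shows that `M` maps the standard basis to a Minkowski-orthogonal frame whose
vectors have squares `a, -a, -a, -a`, so `M` multiplies the Minkowski form by `a`. Surjectivity
of `M` rules out `a = 0`, and `a < 0` would make `M e₁`, `M e₂` orthogonal timelike vectors,
which do not exist. Hence `M = √a • L` with `L` Lorentz. -/

section MinkowskiForm

variable {R : Type*} [CommRing R]

def minkSq (x : Fin 4 → R) : R := x 0 ^ 2 - x 1 ^ 2 - x 2 ^ 2 - x 3 ^ 2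

def minkInner (x y : Fin 4 → R) : R := x 0 * y 0 - x 1 * y 1 - x 2 * y 2 - x 3 * y 3

lemma minkSq_eq_zero_iff {x : Fin 4 → R} :
    minkSq x = 0 ↔ x 1 ^ 2 + x 2 ^ 2 + x 3 ^ 2 = x 0 ^ 2 := by
  unfold minkSq
  constructor <;> intro h <;> linear_combination -h

lemma minkInner_comm (x y : Fin 4 → R) : minkInner x y = minkInner y x := by
  unfold minkInner; ring

lemma minkSq_add (x y : Fin 4 → R) :
    minkSq (x + y) = minkSq x + 2 * minkInner x y + minkSq y := by
  simp only [minkSq, minkInner, Pi.add_apply]; ring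

lemma minkSq_sub (x y : Fin 4 → R) :
    minkSq (x - y) = minkSq x - 2 * minkInner x y + minkSq y := by
  simp only [minkSq, minkInner, Pi.sub_apply]; ring

lemma minkSq_smul (c : R) (x : Fin 4 → R) : minkSq (c • x) = c ^ 2 * minkSq x := by
  simp only [minkSq, Pi.smul_apply, smul_eq_mul]; ring

lemma minkInner_smul_left (c : R) (x y : Fin 4 → R) :
    minkInner (c • x) y = c * minkInner x y := by
  simp only [minkInner, Pi.smul_apply, smul_eq_mul]; ring

lemma minkInner_add_left (x y z : Fin 4 → R) :
    minkInner (x + y) z = minkInner x z + minkInner y z := by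
  simp only [minkInner, Pi.add_apply]; ring

lemma minkSq_single_zero_add_single {i : Fin 4} (hi : i ≠ 0) :
    minkSq (Pi.single 0 1 + Pi.single i 1 : Fin 4 → R) = 0 := by
  fin_cases i <;> simp_all [minkSq]

lemma minkSq_single_zero_sub_single {i : Fin 4} (hi : i ≠ 0) :
    minkSq (Pi.single 0 1 - Pi.single i 1 : Fin 4 → R) = 0 := by
  fin_cases i <;> simp_all [minkSq]

lemma minkSq_smul_single_zero_add_single_add_single {i j : Fin 4} (hi : i ≠ 0) (hj : j ≠ 0)
    (hij : i ≠ j) (s : R) :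
    minkSq (s • Pi.single 0 1 + Pi.single i 1 + Pi.single j 1 : Fin 4 → R) = s ^ 2 - 2 := by
  fin_cases i <;> fin_cases j <;> simp_all [minkSq] <;> ring

lemma minkSq_sum_smul_of_pairwise_minkInner_eq_zero (u : Fin 4 → Fin 4 → R)
    (horth : Pairwise fun i j => minkInner (u i) (u j) = 0)
    (hnorm : ∀ i, i ≠ 0 → minkSq (u i) = -minkSq (u 0)) (x : Fin 4 → R) :
    minkSq (∑ i, x i • u i) = minkSq (u 0) * minkSq x := by
  have h01 := horth (i := 0) (j := 1) (by decide)
  have h02 := horth (i := 0) (j := 2) (by decide)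
  have h03 := horth (i := 0) (j := 3) (by decide)
  have h12 := horth (i := 1) (j := 2) (by decide)
  have h13 := horth (i := 1) (j := 3) (by decide)
  have h23 := horth (i := 2) (j := 3) (by decide)
  have h1 := hnorm 1 (by decide)
  have h2 := hnorm 2 (by decide)
  have h3 := hnorm 3 (by decide)
  simp only [minkSq, minkInner] at *
  simp only [Fin.sum_univ_four, Pi.add_apply, Pi.smul_apply, smul_eq_mul]
  linear_combination x 1 ^ 2 * h1 + x 2 ^ 2 * h2 + x 3 ^ 2 * h3
    + 2 * x 0 * x 1 * h01 + 2 * x 0 * x 2 * h02 + 2 * x 0 * x 3 * h03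
    + 2 * x 1 * x 2 * h12 + 2 * x 1 * x 3 * h13 + 2 * x 2 * x 3 * h23

end MinkowskiForm

section ConformalMaps

variable {K : Type*} [Field K] [CharZero K]

lemma minkInner_eq_zero_and_minkSq_eq_neg_of_null {a b : Fin 4 → K}
    (hadd : minkSq (a + b) = 0) (hsub : minkSq (a - b) = 0) :
    minkInner a b = 0 ∧ minkSq b = -minkSq a := by
  rw [minkSq_add] at hadd
  rw [minkSq_sub] at hsub
  constructor
  · linear_combination (hadd - hsub) / 4
  · linear_combination (hadd + hsub) / 2

lemma minkInner_eq_zero_of_null {s : K} (hs : s ^ 2 = 2) {a b c : Fin 4 → K}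
    (hab : minkInner a b = 0) (hac : minkInner a c = 0)
    (hb : minkSq b = -minkSq a) (hc : minkSq c = -minkSq a)
    (habc : minkSq (s • a + b + c) = 0) : minkInner b c = 0 := by
  simp only [minkSq_add, minkSq_smul, minkInner_add_left, minkInner_smul_left] at habc
  linear_combination (habc - minkSq a * hs - 2 * s * hab - 2 * s * hac - hb - hc) / 2

lemma minkSq_map_eq_mul_of_null_preserving {s : K} (hs : s ^ 2 = 2)
    (M : (Fin 4 → K) →ₗ[K] (Fin 4 → K)) (hM : ∀ v, minkSq v = 0 → minkSq (M v) = 0)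
    (x : Fin 4 → K) : minkSq (M x) = minkSq (M (Pi.single 0 1)) * minkSq x := by
  set u : Fin 4 → Fin 4 → K := fun i => M (Pi.single i 1) with hu
  have hpair : ∀ i, i ≠ 0 → minkInner (u 0) (u i) = 0 ∧ minkSq (u i) = -minkSq (u 0) :=
    fun i hi => minkInner_eq_zero_and_minkSq_eq_neg_of_null
      (by rw [hu, ← map_add]; exact hM _ (minkSq_single_zero_add_single hi))
      (by rw [hu, ← map_sub]; exact hM _ (minkSq_single_zero_sub_single hi))
  have horth : Pairwise fun i j => minkInner (u i) (u j) = 0 := by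
    intro i j hij
    rcases eq_or_ne i 0 with rfl | hi
    · exact (hpair j hij.symm).1
    rcases eq_or_ne j 0 with rfl | hj
    · exact minkInner_comm (u i) (u 0) ▸ (hpair i hi).1
    refine minkInner_eq_zero_of_null hs (hpair i hi).1 (hpair j hj).1 (hpair i hi).2
      (hpair j hj).2 ?_
    rw [hu, ← map_smul, ← map_add, ← map_add]
    exact hM _ (by rw [minkSq_smul_single_zero_add_single_add_single hi hj hij, hs, sub_self])
  have hx : M x = ∑ i, x i • u i := by
    conv_lhs => rw [← Finset.univ_sum_single x, map_sum]
    refine Finset.sum_congr rfl fun i _ => ?_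
    rw [hu, ← map_smul, ← Pi.single_smul', smul_eq_mul, mul_one]
  rw [hx]
  exact minkSq_sum_smul_of_pairwise_minkInner_eq_zero u horth (fun i hi => (hpair i hi).2) x

lemma minkInner_map_of_minkSq_map (M : (Fin 4 → K) →ₗ[K] (Fin 4 → K)) {a : K}
    (hM : ∀ x, minkSq (M x) = a * minkSq x) (x y : Fin 4 → K) :
    minkInner (M x) (M y) = a * minkInner x y := by
  have hxy := hM (x + y)
  rw [map_add, minkSq_add, minkSq_add, hM x, hM y] at hxy
  linear_combination hxy / 2

end ConformalMaps

section OrderedField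

variable {Q : Type*} [Field Q] [LinearOrder Q] [IsStrictOrderedRing Q]

lemma minkSq_nonpos_of_apply_zero_eq_zero {x : Fin 4 → Q} (hx : x 0 = 0) : minkSq x ≤ 0 := by
  unfold minkSq
  rw [hx]
  nlinarith [sq_nonneg (x 1), sq_nonneg (x 2), sq_nonneg (x 3)]

/-- The combination `b₀ a - a₀ b` has time component `0`, yet would have positive Minkowski
square. -/
lemma minkInner_ne_zero_of_timelike {a b : Fin 4 → Q} (ha : 0 < minkSq a) (hb : 0 < minkSq b) :
    minkInner a b ≠ 0 := by
  intro hab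
  have ha0 : a 0 ≠ 0 := fun h0 => (minkSq_nonpos_of_apply_zero_eq_zero h0).not_gt ha
  have hsq : minkSq (b 0 • a - a 0 • b) =
      b 0 ^ 2 * minkSq a + a 0 ^ 2 * minkSq b - 2 * a 0 * b 0 * minkInner a b := by
    simp only [minkSq, minkInner, Pi.sub_apply, Pi.smul_apply, smul_eq_mul]; ring
  have hle := minkSq_nonpos_of_apply_zero_eq_zero (x := b 0 • a - a 0 • b)
    (by simp only [Pi.sub_apply, Pi.smul_apply, smul_eq_mul]; ring)
  rw [hsq, hab] at hle
  have : 0 < a 0 ^ 2 * minkSq b := mul_pos (by positivity) hb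
  nlinarith [mul_nonneg (sq_nonneg (b 0)) ha.le]

lemma pos_of_minkSq_map_eq_mul (M : (Fin 4 → Q) →ₗ[Q] (Fin 4 → Q)) (hsurj : Function.Surjective M)
    {a : Q} (hM : ∀ x, minkSq (M x) = a * minkSq x) : 0 < a := by
  rcases lt_trichotomy a 0 with hneg | rfl | hpos
  · have h1 : 0 < minkSq (M (Pi.single 1 1)) := by rw [hM]; simpa [minkSq] using hneg
    have h2 : 0 < minkSq (M (Pi.single 2 1)) := by rw [hM]; simpa [minkSq] using hneg
    refine absurd ?_ (minkInner_ne_zero_of_timelike h1 h2)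
    rw [minkInner_map_of_minkSq_map M hM]
    simp [minkInner]
  · obtain ⟨x, hx⟩ := hsurj (Pi.single 0 1)
    have := hM x
    simp [hx, minkSq] at this
  · exact hpos

lemma AxEField.exists_pos_sq_eq (hE : AxEField Q) {a : Q} (ha : 0 < a) :
    ∃ q : Q, 0 < q ∧ q ^ 2 = a := by
  obtain ⟨y, hy⟩ := hE a ha.le
  refine ⟨|y|, abs_pos.2 ?_, by rw [sq_abs, hy]⟩
  rintro rfl
  simp [← hy] at ha

lemma exists_pos_smul_minkNorm_preserving (hE : AxEField Q) (M : (Fin 4 → Q) →ₗ[Q] (Fin 4 → Q))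
    {a : Q} (ha : 0 < a) (hM : ∀ x, minkSq (M x) = a * minkSq x) :
    ∃ q : Q, 0 < q ∧ ∃ L : (Fin 4 → Q) →ₗ[Q] (Fin 4 → Q),
      (∀ x, minkNorm (L x) = minkNorm x) ∧ ∀ x, M x = q • L x := by
  obtain ⟨q, hq, rfl⟩ := hE.exists_pos_sq_eq ha
  refine ⟨q, hq, q⁻¹ • M, fun x => ?_, fun x => (smul_inv_smul₀ hq.ne' (M x)).symm⟩
  change esqrt |minkSq (q⁻¹ • M x)| = esqrt |minkSq x|
  rw [minkSq_smul, hM, ← mul_assoc, ← mul_pow, inv_mul_cancel₀ hq.ne', one_pow, one_mul]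

end OrderedField

namespace Frame

variable {Q : Type*} [Field Q] [LinearOrder Q] [IsStrictOrderedRing Q] {B : Type*} {F : Frame Q B}

lemma AxPh.minkSq_w_sub_w_eq_zero (hPh : F.AxPh) (hW : F.AxW) {k h : B} (hk : k ∈ F.IOb)
    (hh : h ∈ F.IOb) {x y : Fin 4 → Q} (hxy : minkSq (x - y) = 0) :
    minkSq (F.w k h x - F.w k h y) = 0 := by
  simp only [minkSq_eq_zero_iff, Pi.sub_apply] at hxy ⊢
  obtain ⟨p, hp, hx, hy⟩ := (hPh k hk x y).2 hxy
  have hwl := (hW k hk h hh).2.2 p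
  exact (hPh h hh _ _).1 ⟨p, hp, hwl ▸ Set.mem_image_of_mem _ hx, hwl ▸ Set.mem_image_of_mem _ hy⟩

end Frame

/-- **Lemma 3(a) (decomposition, relativistic case).**  Assume `BA` and
`AxPh`.  For inertial observers `k`, `h` there are `q > 0` and a Lorentz
transformation `L` (a linear map preserving the Minkowski norm) with
`w_{kh}(x) − w_{kh}(0) = q·L(x)` for all `x`. -/
theorem worldview_decomposition_lorentz
    {Q : Type*} [Field Q] [LinearOrder Q] [IsStrictOrderedRing Q] {B : Type*} (F : Frame Q B)
    (hBA : F.BA) (hPh : F.AxPh)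
    (k h : B) (hk : k ∈ F.IOb) (hh : h ∈ F.IOb) :
    ∃ q : Q, 0 < q ∧ ∃ L : (Fin 4 → Q) →ₗ[Q] (Fin 4 → Q),
      (∀ x : Fin 4 → Q, minkNorm (L x) = minkNorm x) ∧
      ∀ x : Fin 4 → Q, F.w k h x - F.w k h 0 = q • L x := by
  obtain ⟨hE, -, hW, -⟩ := hBA
  obtain ⟨hbij, ⟨M, hM⟩, -⟩ := hW k hk h hh
  have hlin : ∀ x, F.w k h x - F.w k h 0 = M x := fun x => sub_eq_of_eq_add (hM x)
  have hsurj : Function.Surjective M := by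
    intro y
    obtain ⟨x, hx⟩ := hbij.2 (y + F.w k h 0)
    exact ⟨x, by rw [← hlin, hx, add_sub_cancel_right]⟩
  have hnull : ∀ v, minkSq v = 0 → minkSq (M v) = 0 := fun v hv => by
    rw [← hlin]
    exact hPh.minkSq_w_sub_w_eq_zero hW hk hh (by rwa [sub_zero])
  obtain ⟨s, hs⟩ := hE 2 zero_le_two
  have hconf := minkSq_map_eq_mul_of_null_preserving hs M hnull
  obtain ⟨q, hq, L, hL, hML⟩ := exists_pos_smul_minkNorm_preserving hE M
    (pos_of_minkSq_map_eq_mul M hsurj hconf) hconf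
  exact ⟨q, hq, L, hL, fun x => (hlin x).trans (hML x)⟩
end
end

section
/- Assume the axioms BA and AxAbsSim, and let k, h be inertial observers. Then there exist q ∈ Q with q > 0 and a time-preserving linear transformation L : Q⁴ → Q⁴ such that w_{kh}(x) − w_{kh}(0) = q·L(x) for all x ∈ Q⁴. -/
open scoped Classical

noncomputable section

/-! The world-view transformation is affine, so `w_{kh}(x) − w_{kh}(0)` is its linear part `M`.
Absolute simultaneity says that `M` maps the hyperplane of simultaneity `x₁ = 0` into itself,
so the time component of `M x` is `a · x₁` for a constant `a`, and `a ≠ 0` because `M` does not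
map the time unit vector into that hyperplane. Then `q = |a|` and `L = |a|⁻¹ • M`. -/

namespace LinearMap

variable {ι K : Type*}

theorem apply_eq_apply_single_mul [DecidableEq ι] [CommRing K] (φ : (ι → K) →ₗ[K] K) (i : ι)
    (hφ : ∀ x, x i = 0 → φ x = 0) (x : ι → K) : φ x = φ (Pi.single i 1) * x i := by
  have hsplit : x = (x - x i • Pi.single i 1) + x i • Pi.single i 1 := by abel
  have hker : φ (x - x i • Pi.single i 1) = 0 := hφ _ (by simp)
  conv_lhs => rw [hsplit]
  rw [map_add, hker, map_smul, smul_eq_mul, zero_add, mul_comm]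

theorem exists_ne_zero_apply_eq_mul_of_apply_eq_zero_iff [DecidableEq ι] [Field K]
    (M : (ι → K) →ₗ[K] (ι → K)) (i : ι) (hM : ∀ x, M x i = 0 ↔ x i = 0) :
    ∃ a : K, a ≠ 0 ∧ ∀ x, M x i = a * x i := by
  have hφ := ((proj i).comp M).apply_eq_apply_single_mul i fun x hx => (hM x).mpr hx
  refine ⟨M (Pi.single i 1) i, fun ha => ?_, hφ⟩
  simpa using (hM (Pi.single i 1)).mp ha

theorem exists_pos_smul_of_apply_eq_mul [Field K] [LinearOrder K] [IsStrictOrderedRing K]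
    (M : (ι → K) →ₗ[K] (ι → K)) (i : ι) {a : K} (ha : a ≠ 0) (hM : ∀ x, M x i = a * x i) :
    ∃ q : K, 0 < q ∧ ∃ L : (ι → K) →ₗ[K] (ι → K),
      (∀ x, |L x i| = |x i|) ∧ ∀ x, M x = q • L x := by
  have hq : |a| ≠ 0 := abs_ne_zero.mpr ha
  refine ⟨|a|, abs_pos.mpr ha, |a|⁻¹ • M, fun x => ?_, fun x => ?_⟩
  · simp only [smul_apply, Pi.smul_apply, smul_eq_mul, hM, abs_mul, abs_inv, abs_abs,
      inv_mul_cancel_left₀ hq]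
  · simp only [smul_apply, smul_smul, mul_inv_cancel₀ hq, one_smul]

end LinearMap

namespace Frame

variable {Q : Type*} [Field Q] [LinearOrder Q] [IsStrictOrderedRing Q] {B : Type*} {F : Frame Q B}

theorem exists_linearMap_w_sub_w_zero_time_eq_zero_iff (hW : F.AxW) (hAbs : F.AxAbsSim)
    {k h : B} (hk : k ∈ F.IOb) (hh : h ∈ F.IOb) :
    ∃ M : (Fin 4 → Q) →ₗ[Q] (Fin 4 → Q),
      (∀ x, F.w k h x - F.w k h 0 = M x) ∧ ∀ x, M x 0 = 0 ↔ x 0 = 0 := by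
  obtain ⟨-, ⟨M, hM⟩, -⟩ := hW k hk h hh
  have hsub : ∀ x, F.w k h x - F.w k h 0 = M x := fun x => by rw [hM x, add_sub_cancel_right]
  refine ⟨M, hsub, fun x => ?_⟩
  have hsim := hAbs k hk h hh x 0
  rwa [← sub_eq_zero, ← Pi.sub_apply, hsub, Pi.zero_apply] at hsim

end Frame

/-- **Lemma 3(b) (decomposition, Newtonian case).**  Assume `BA` and
`AxAbsSim`.  For inertial observers `k`, `h` there are `q > 0` and a
time-preserving linear transformation `L` (i.e. `|(L x)₁| = |x₁|`) with
`w_{kh}(x) − w_{kh}(0) = q·L(x)` for all `x`. -/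
theorem worldview_decomposition_time_preserving
    {Q : Type*} [Field Q] [LinearOrder Q] [IsStrictOrderedRing Q] {B : Type*} (F : Frame Q B)
    (hBA : F.BA) (hAbs : F.AxAbsSim)
    (k h : B) (hk : k ∈ F.IOb) (hh : h ∈ F.IOb) :
    ∃ q : Q, 0 < q ∧ ∃ L : (Fin 4 → Q) →ₗ[Q] (Fin 4 → Q),
      (∀ x : Fin 4 → Q, |(L x) 0| = |x 0|) ∧
      ∀ x : Fin 4 → Q, F.w k h x - F.w k h 0 = q • L x := by
  obtain ⟨M, hsub, hsim⟩ :=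
    Frame.exists_linearMap_w_sub_w_zero_time_eq_zero_iff hBA.2.2.1 hAbs hk hh
  obtain ⟨a, ha, hM⟩ := M.exists_ne_zero_apply_eq_mul_of_apply_eq_zero_iff 0 hsim
  obtain ⟨q, hq, L, hL, hML⟩ := M.exists_pos_smul_of_apply_eq_mul 0 ha hM
  exact ⟨q, hq, L, hL, fun x => (hsub x).trans (hML x)⟩
end
end

section
/- Assume the axioms BA and AxAbsSim. Then for all inertial observers k and h, the speed v_k(h) is finite (no inertial observer moves with infinite speed relative to another). -/
open scoped Classical

noncomputable section

namespace Frame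

variable {Q B : Type*} {F : Frame Q B} {k h : B}

theorem AxSelf.eq_of_time_eq [Field Q] (hSelf : F.AxSelf) (hk : k ∈ F.IOb) {x y : Fin 4 → Q}
    (hx : x ∈ F.wl k k) (hy : y ∈ F.wl k k) (h0 : x 0 = y 0) : x = y := by
  obtain ⟨hx₁, hx₂, hx₃⟩ := hSelf k hk x hx
  obtain ⟨hy₁, hy₂, hy₃⟩ := hSelf k hk y hy
  ext i
  fin_cases i
  exacts [h0, hx₁.trans hy₁.symm, hx₂.trans hy₂.symm, hx₃.trans hy₃.symm]

theorem AxSelf.finite_self [Field Q] (hSelf : F.AxSelf) (hk : k ∈ F.IOb) : F.finite k k :=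
  fun _ hx _ hy hxy h0 => hxy (hSelf.eq_of_time_eq hk hx hy h0)

/-- `w k h` is injective and, by absolute simultaneity, carries simultaneous events to
simultaneous events; so two distinct simultaneous events on `wl k b` would give two on `wl h b`. -/
theorem finite_of_finite_of_AxAbsSim [Field Q] [LinearOrder Q] [IsStrictOrderedRing Q]
    (hW : F.AxW) (hAbs : F.AxAbsSim) (hk : k ∈ F.IOb) (hh : h ∈ F.IOb) {b : B}
    (hfin : F.finite h b) : F.finite k b := by
  obtain ⟨hbij, -, himg⟩ := hW k hk h hh
  have hmaps : ∀ z ∈ F.wl k b, F.w k h z ∈ F.wl h b := fun z hz => himg b ▸ ⟨z, hz, rfl⟩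
  intro x hx y hy hxy h0
  exact hfin _ (hmaps x hx) _ (hmaps y hy) (hbij.1.ne hxy) ((hAbs k hk h hh x y).2 h0)

end Frame

/-- **Corollary (no infinitely fast inertial observers).**  Assume `BA` and
`AxAbsSim`.  For all inertial observers `k`, `h`, the speed `v_k(h)` is
finite. -/
theorem no_infinitely_fast_observers
    {Q : Type*} [Field Q] [LinearOrder Q] [IsStrictOrderedRing Q] {B : Type*} (F : Frame Q B)
    (hBA : F.BA) (hAbs : F.AxAbsSim)
    (k h : B) (hk : k ∈ F.IOb) (hh : h ∈ F.IOb) :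
    F.finite k h := by
  obtain ⟨-, -, hW, hSelf⟩ := hBA
  exact Frame.finite_of_finite_of_AxAbsSim hW hAbs hk hh (hSelf.finite_self hh)
end
end

section
/- Let F be a Euclidean field and let f : F → F be a quadratic function, i.e. f(x) = a·x² + b·x + c for some a, b, c ∈ F. If p, q ∈ F satisfy p < q, f(p) > 0 and f(q) < 0, then f has a root strictly between p and q: there is r ∈ F with f(r) = 0 and p < r < q. -/
/-!
If `a = 0` the function is affine and its root `-c / b` lies between `p` and `q`.
Otherwise `4 a f(x) = (2 a x + b)² - discrim a b c`, so the sign change of `f` forces the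
discriminant to be positive; in a Euclidean field it has a square root `s`, and
`f(x) = a (x - r₁) (x - r₂)`. Then `f(p) f(q) = a² (p - r₁)(q - r₁) (p - r₂)(q - r₂) < 0`,
so some `(p - rᵢ)(q - rᵢ)` is negative, i.e. `rᵢ` lies strictly between `p` and `q`.
-/

open Set

section Field

variable {K : Type*} [Field K] [NeZero (2 : K)] {a b c s : K}

theorem quadratic_eq_mul_sub_mul_sub (ha : a ≠ 0) (h : discrim a b c = s * s) (x : K) :
    a * (x * x) + b * x + c = a * (x - (-b + s) / (2 * a)) * (x - (-b - s) / (2 * a)) := by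
  have h2a : 2 * a ≠ 0 := mul_ne_zero two_ne_zero ha
  rw [discrim] at h
  field_simp
  linear_combination -h

end Field

section LinearOrderedField

variable {K : Type*} [Field K] [LinearOrder K] [IsStrictOrderedRing K] {a b c p q r s : K}

theorem mem_Ioo_of_sub_mul_sub_neg (hpq : p < q) (h : (p - r) * (q - r) < 0) : r ∈ Ioo p q := by
  rcases mul_neg_iff.1 h with ⟨_, _⟩ | ⟨_, _⟩
  · linarith
  · exact ⟨by linarith, by linarith⟩

theorem discrim_pos_of_quadratic_mul_neg (ha : a ≠ 0)
    (h : (a * (p * p) + b * p + c) * (a * (q * q) + b * q + c) < 0) : 0 < discrim a b c := by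
  have hsquare : ∀ x, 4 * a * (a * (x * x) + b * x + c) = (2 * a * x + b) ^ 2 - discrim a b c :=
    fun x => by rw [discrim]; ring
  have hprod : (4 * a * (a * (p * p) + b * p + c)) * (4 * a * (a * (q * q) + b * q + c)) < 0 := by
    have : 0 < (4 * a) * (4 * a) := mul_self_pos.2 (mul_ne_zero four_ne_zero ha)
    nlinarith
  rw [hsquare, hsquare] at hprod
  rcases mul_neg_iff.1 hprod with ⟨_, _⟩ | ⟨_, _⟩
  · nlinarith [sq_nonneg (2 * a * q + b)]
  · nlinarith [sq_nonneg (2 * a * p + b)]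

theorem exists_linear_eq_zero_mem_Ioo (hpq : p < q) (h : (b * p + c) * (b * q + c) < 0) :
    ∃ r ∈ Ioo p q, b * r + c = 0 := by
  have hb : b ≠ 0 := by
    rintro rfl
    nlinarith [mul_self_nonneg c]
  have hfac : ∀ x, b * x + c = b * (x - -c / b) := fun x => by field_simp; ring
  refine ⟨-c / b, mem_Ioo_of_sub_mul_sub_neg hpq ?_, by rw [hfac, sub_self, mul_zero]⟩
  rw [hfac, hfac] at h
  have : (p - -c / b) * (q - -c / b) * (b * b) < 0 := by linarith
  exact neg_of_mul_neg_left this (mul_self_nonneg b)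

theorem exists_quadratic_eq_zero_mem_Ioo (ha : a ≠ 0) (hs : discrim a b c = s * s) (hpq : p < q)
    (h : (a * (p * p) + b * p + c) * (a * (q * q) + b * q + c) < 0) :
    ∃ r ∈ Ioo p q, a * (r * r) + b * r + c = 0 := by
  set r₁ := (-b + s) / (2 * a)
  set r₂ := (-b - s) / (2 * a)
  rw [quadratic_eq_mul_sub_mul_sub ha hs, quadratic_eq_mul_sub_mul_sub ha hs] at h
  have hroots : (p - r₁) * (q - r₁) * ((p - r₂) * (q - r₂)) < 0 := by
    have hprod : (p - r₁) * (q - r₁) * ((p - r₂) * (q - r₂)) * (a * a) < 0 := by linarith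
    exact neg_of_mul_neg_left hprod (mul_self_nonneg a)
  rcases mul_neg_iff.1 hroots with ⟨_, h₂⟩ | ⟨h₁, _⟩
  · exact ⟨r₂, mem_Ioo_of_sub_mul_sub_neg hpq h₂,
      by rw [quadratic_eq_mul_sub_mul_sub ha hs, sub_self, mul_zero]⟩
  · exact ⟨r₁, mem_Ioo_of_sub_mul_sub_neg hpq h₁,
      by rw [quadratic_eq_mul_sub_mul_sub ha hs, sub_self, mul_zero, zero_mul]⟩

end LinearOrderedField

/-- **Bolzano's theorem for quadratic functions over a Euclidean field.**
Let `F` be a Euclidean field (a linearly ordered field in which every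
nonnegative element has a square root) and `f(x) = a·x² + b·x + c` a
quadratic function.  If `p < q`, `f(p) > 0` and `f(q) < 0`, then `f` has a
root strictly between `p` and `q`. -/
theorem quadratic_bolzano
    {F : Type*} [Field F] [LinearOrder F] [IsStrictOrderedRing F]
    (hE : ∀ x : F, 0 ≤ x → ∃ y : F, y ^ 2 = x)
    (f : F → F) (a b c : F) (hf : ∀ x : F, f x = a * x ^ 2 + b * x + c)
    (p q : F) (hpq : p < q) (hp : 0 < f p) (hq : f q < 0) :
    ∃ r : F, f r = 0 ∧ p < r ∧ r < q := by
  have hsign : f p * f q < 0 := mul_neg_of_pos_of_neg hp hq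
  simp only [hf, sq] at hsign ⊢
  obtain ⟨r, ⟨hpr, hrq⟩, hr⟩ : ∃ r ∈ Ioo p q, a * (r * r) + b * r + c = 0 := by
    rcases eq_or_ne a 0 with rfl | ha
    · simp only [zero_mul, zero_add] at hsign ⊢
      exact exists_linear_eq_zero_mem_Ioo hpq hsign
    · obtain ⟨s, hs⟩ := hE _ (discrim_pos_of_quadratic_mul_neg ha hsign).le
      exact exists_quadratic_eq_zero_mem_Ioo ha (by rw [← hs, sq]) hpq hsign
  exact ⟨r, hr, hpr, hrq⟩
end

section
/- Let F be a Euclidean field, let f₁, f₂ : F → F be quadratic functions (fᵢ(x) = aᵢ·x² + bᵢ·x + cᵢ), let s ∈ F, and let f : F → F be a function satisfying f(x) = f₁(x) for all x ≤ s and f(x) = f₂(x) for all x ≥ s. If p, q ∈ F satisfy p < q, f(p) > 0 and f(q) < 0, then f has a root strictly between p and q: there is r ∈ F with f(r) = 0 and p < r < q. -/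
/-!
Over a Euclidean field the quadratic formula produces the root of a quadratic at a sign change
explicitly, so quadratics (and, by reflection, also those with negative leading coefficient)
have the intermediate value property for roots. That property glues across `s`: either `f s = 0`,
or the sign of `f s` yields a sign change of a single piece on one side of `s`.
-/

def HasBolzanoProperty {α β : Type*} [LinearOrder α] [LinearOrder β] [Zero β]
    (g : α → β) : Prop :=
  ∀ p q, p < q → 0 < g p → g q < 0 → ∃ r, g r = 0 ∧ p < r ∧ r < q

namespace HasBolzanoProperty

theorem piecewise {α β : Type*} [LinearOrder α] [LinearOrder β] [Zero β]
    {f f₁ f₂ : α → β} {s : α} (h₁ : HasBolzanoProperty f₁) (h₂ : HasBolzanoProperty f₂)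
    (hle : ∀ x, x ≤ s → f x = f₁ x) (hge : ∀ x, s ≤ x → f x = f₂ x) :
    HasBolzanoProperty f := by
  intro p q hpq hp hq
  rcases le_or_gt s p with hsp | hps
  · obtain ⟨r, hr, hpr, hrq⟩ :=
      h₂ p q hpq (hge p hsp ▸ hp) (hge q (hsp.trans hpq.le) ▸ hq)
    exact ⟨r, hge r (hsp.trans hpr.le) ▸ hr, hpr, hrq⟩
  rcases le_or_gt q s with hqs | hsq
  · obtain ⟨r, hr, hpr, hrq⟩ :=
      h₁ p q hpq (hle p (hpq.le.trans hqs) ▸ hp) (hle q hqs ▸ hq)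
    exact ⟨r, hle r (hrq.le.trans hqs) ▸ hr, hpr, hrq⟩
  rcases lt_trichotomy (f s) 0 with hs | hs | hs
  · obtain ⟨r, hr, hpr, hrs⟩ := h₁ p s hps (hle p hps.le ▸ hp) (hle s le_rfl ▸ hs)
    exact ⟨r, hle r hrs.le ▸ hr, hpr, hrs.trans hsq⟩
  · exact ⟨s, hs, hps, hsq⟩
  · obtain ⟨r, hr, hsr, hrq⟩ := h₂ s q hsq (hge s le_rfl ▸ hs) (hge q hsq.le ▸ hq)
    exact ⟨r, hge r hsr.le ▸ hr, hps.trans hsr, hrq⟩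

theorem neg_comp_neg {α β : Type*} [AddCommGroup α] [LinearOrder α] [IsOrderedAddMonoid α]
    [AddCommGroup β] [LinearOrder β] [IsOrderedAddMonoid β] {g : α → β}
    (h : HasBolzanoProperty g) : HasBolzanoProperty fun x => -g (-x) := by
  intro p q hpq hp hq
  obtain ⟨r, hr, hqr, hrp⟩ :=
    h (-q) (-p) (neg_lt_neg hpq) (neg_lt_zero.mp hq) (neg_pos.mp hp)
  exact ⟨-r, by simp [hr], lt_neg_of_lt_neg hrp, neg_lt.mp hqr⟩

variable {F : Type*} [Field F] [LinearOrder F] [IsStrictOrderedRing F]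

theorem linear (b c : F) : HasBolzanoProperty fun x : F => b * x + c := by
  intro p q hpq hp hq
  have hb : b < 0 := by nlinarith
  refine ⟨-c / b, by field_simp [hb.ne]; ring, ?_, ?_⟩
  · rw [lt_div_iff_of_neg hb]; linarith
  · rw [div_lt_iff_of_neg hb]; linarith

/-- With `d² = b² - 4ac`, `d ≥ 0`, the identity `4a(ax² + bx + c) = (2ax + b - d)(2ax + b + d)`
shows that `g q < 0` forces `2aq + b > -d` and `g p > 0`, `p < q` force `2ap + b < -d`;
so the smaller root `(-b - d) / 2a` lies in `(p, q)`. -/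
theorem quadratic_of_pos (hE : ∀ x : F, 0 ≤ x → ∃ y : F, y ^ 2 = x) {a : F} (b c : F)
    (ha : 0 < a) : HasBolzanoProperty fun x : F => a * x ^ 2 + b * x + c := by
  intro p q hpq hp hq
  obtain ⟨y, hy⟩ := hE (b ^ 2 - 4 * a * c) (by nlinarith [sq_nonneg (2 * a * q + b)])
  set d := |y|
  have hd : 0 ≤ d := abs_nonneg y
  have factor : ∀ x, 4 * a * (a * x ^ 2 + b * x + c) = (2 * a * x + b - d) * (2 * a * x + b + d) :=
    fun x => by linear_combination (sq_abs y).trans hy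
  have hq' : -d < 2 * a * q + b := by
    have : (2 * a * q + b - d) * (2 * a * q + b + d) < 0 := factor q ▸ by nlinarith
    rcases mul_neg_iff.mp this with h | h <;> linarith
  have hp' : 2 * a * p + b < -d := by
    have : 0 < (2 * a * p + b - d) * (2 * a * p + b + d) := factor p ▸ by positivity
    rcases mul_pos_iff.mp this with h | h
    · nlinarith
    · linarith
  have h2a : 0 < 2 * a := by positivity
  refine ⟨(-b - d) / (2 * a), ?_, ?_, ?_⟩
  · have h4a : 4 * a * (a * ((-b - d) / (2 * a)) ^ 2 + b * ((-b - d) / (2 * a)) + c) = 0 := by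
      rw [factor, mul_div_cancel₀ _ h2a.ne']; ring
    exact (mul_eq_zero.mp h4a).resolve_left (by positivity)
  · rw [lt_div_iff₀ h2a]; linarith
  · rw [div_lt_iff₀ h2a]; linarith

theorem quadratic (hE : ∀ x : F, 0 ≤ x → ∃ y : F, y ^ 2 = x) (a b c : F) :
    HasBolzanoProperty fun x : F => a * x ^ 2 + b * x + c := by
  rcases lt_trichotomy a 0 with ha | rfl | ha
  · have reflect : (fun x : F => a * x ^ 2 + b * x + c) =
        fun x => -(-a * (-x) ^ 2 + b * -x + -c) := by
      funext x; ring
    exact reflect ▸ (quadratic_of_pos hE b (-c) (neg_pos.mpr ha)).neg_comp_neg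
  · simpa using linear b c
  · exact quadratic_of_pos hE b c ha

end HasBolzanoProperty

/-- **Bolzano's theorem for piecewise-quadratic functions over a Euclidean
field.**  Let `F` be a Euclidean field, `f₁`, `f₂` quadratic functions,
`s ∈ F`, and `f` a function agreeing with `f₁` on `(-∞, s]` and with `f₂` on
`[s, ∞)`.  If `p < q`, `f(p) > 0` and `f(q) < 0`, then `f` has a root strictly
between `p` and `q`. -/
theorem piecewise_quadratic_bolzano
    {F : Type*} [Field F] [LinearOrder F] [IsStrictOrderedRing F]
    (hE : ∀ x : F, 0 ≤ x → ∃ y : F, y ^ 2 = x)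
    (f f₁ f₂ : F → F) (a₁ b₁ c₁ a₂ b₂ c₂ : F)
    (hf₁ : ∀ x : F, f₁ x = a₁ * x ^ 2 + b₁ * x + c₁)
    (hf₂ : ∀ x : F, f₂ x = a₂ * x ^ 2 + b₂ * x + c₂)
    (s : F)
    (hle : ∀ x : F, x ≤ s → f x = f₁ x)
    (hge : ∀ x : F, s ≤ x → f x = f₂ x)
    (p q : F) (hpq : p < q) (hp : 0 < f p) (hq : f q < 0) :
    ∃ r : F, f r = 0 ∧ p < r ∧ r < q := by
  have h₁ : HasBolzanoProperty f₁ := funext hf₁ ▸ HasBolzanoProperty.quadratic hE a₁ b₁ c₁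
  have h₂ : HasBolzanoProperty f₂ := funext hf₂ ▸ HasBolzanoProperty.quadratic hE a₂ b₂ c₂
  exact HasBolzanoProperty.piecewise h₁ h₂ hle hge p q hpq hp hq
end

section
/- Let F be a Euclidean field, let v, v' ∈ F with v > 0 and v' > 0, and let T : F² → F² be a bijective linear map which maps the line {q·(1,0) : q ∈ F} into the line {q·(1,v') : q ∈ F} and maps the line {q·(1,v) : q ∈ F} into the line {q·(1,0) : q ∈ F}. Then there exists u ∈ F with 0 < u < v such that the first component of T(1,u) is nonzero and |T(1,u)₂| = u·|T(1,u)₁| (i.e. the speed |x₂|/|x₁| of the vector (1,u) equals that of its image T(1,u)). -/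
/-!
Write `T (1, 0) = a • (1, v')` and `T (1, v) = b • (1, 0)`, with `a, b ≠ 0` by injectivity.
Along the segment `u = t v`, `0 < t < 1`, linearity gives
`T (1, t v) = ((1 - t) a + t b, (1 - t) a v')`, so equal speeds amount to
`(1 - t) a v' = ε t v ((1 - t) a + t b)` for a sign `ε`. Choosing `ε` with the sign of `a b`,
the difference of the two sides is a quadratic in `t` of opposite signs at `0` and `1`, and in a
Euclidean field such a quadratic has a root in `(0, 1)` by the quadratic formula.
-/

open Set

section EuclideanField

variable {F : Type*} [Field F] [LinearOrder F] [IsStrictOrderedRing F]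

lemma mul_one_sub_pos_iff {x : F} : 0 < x * (1 - x) ↔ x ∈ Ioo 0 1 := by
  constructor
  · intro h
    rcases mul_pos_iff.1 h with ⟨hx, hx'⟩ | ⟨hx, hx'⟩
    · exact ⟨hx, by linarith⟩
    · linarith
  · rintro ⟨hx, hx'⟩
    exact mul_pos hx (by linarith)

lemma exists_root_linear_mem_Ioo {d e : F} (h : e * (d + e) < 0) :
    ∃ t ∈ Ioo (0 : F) 1, d * t + e = 0 := by
  have hd : d ≠ 0 := by rintro rfl; nlinarith [mul_self_nonneg e]
  refine ⟨-e / d, mul_one_sub_pos_iff.1 ?_, by field_simp; ring⟩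
  have hscaled : -e / d * (1 - -e / d) * (d * d) = -(e * (d + e)) := by field_simp; ring
  exact pos_of_mul_pos_left (hscaled ▸ neg_pos.2 h) (mul_self_nonneg d)

/-- The hypothesis says `f 0 * f 1 < 0` for `f t = c * t ^ 2 + d * t + e`. -/
lemma exists_root_quadratic_mem_Ioo (hE : ∀ x : F, 0 ≤ x → ∃ y : F, y ^ 2 = x)
    {c d e : F} (h : e * (c + d + e) < 0) :
    ∃ t ∈ Ioo (0 : F) 1, c * t ^ 2 + d * t + e = 0 := by
  by_cases hc : c = 0
  · subst hc
    simpa using exists_root_linear_mem_Ioo (d := d) (e := e) (by simpa using h)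
  have hdisc : 0 ≤ d ^ 2 - 4 * c * e := by
    by_contra! hneg
    nlinarith [sq_nonneg (2 * c + d), sq_nonneg d, mul_self_pos.2 hc]
  obtain ⟨s, hs⟩ := hE _ hdisc
  set r₁ := (-d + s) / (2 * c)
  set r₂ := (-d - s) / (2 * c)
  have hr₁ : c * r₁ ^ 2 + d * r₁ + e = 0 := by
    simp only [r₁]; field_simp; linear_combination hs
  have hr₂ : c * r₂ ^ 2 + d * r₂ + e = 0 := by
    simp only [r₂]; field_simp; linear_combination hs
  -- Vieta: `c² · r₁ r₂ · (1 - r₁)(1 - r₂) = f(0) f(1)`, so one of the roots lies in `(0, 1)`.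
  have hvieta : r₁ * (1 - r₁) * (r₂ * (1 - r₂)) * (c * c) = e * (c + d + e) := by
    simp only [r₁, r₂]
    field_simp
    linear_combination (s ^ 2 - d ^ 2 - 4 * c * e - 4 * c ^ 2 - 4 * c * d) * hs
  have hprod : r₁ * (1 - r₁) * (r₂ * (1 - r₂)) < 0 :=
    neg_of_mul_neg_left (hvieta ▸ h) (mul_self_nonneg c)
  rcases mul_neg_iff.1 hprod with ⟨h₁, -⟩ | ⟨-, h₂⟩
  · exact ⟨r₁, mul_one_sub_pos_iff.1 h₁, hr₁⟩
  · exact ⟨r₂, mul_one_sub_pos_iff.1 h₂, hr₂⟩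

lemma exists_abs_eq_mul_abs (hE : ∀ x : F, 0 ≤ x → ∃ y : F, y ^ 2 = x)
    {a b v v' : F} (ha : a ≠ 0) (hb : b ≠ 0) (hv : 0 < v) (hv' : 0 < v') :
    ∃ t ∈ Ioo (0 : F) 1, |(1 - t) * (a * v')| = t * v * |(1 - t) * a + t * b| := by
  obtain ⟨ε, hε, hεab⟩ : ∃ ε : F, |ε| = 1 ∧ 0 < ε * (a * b) := by
    rcases (mul_ne_zero ha hb).lt_or_gt with hab | hab
    · exact ⟨-1, by simp, by linarith⟩
    · exact ⟨1, by simp, by linarith⟩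
  obtain ⟨t, ht, hroot⟩ := exists_root_quadratic_mem_Ioo hE
    (c := ε * v * (a - b)) (d := -(ε * v * a + a * v')) (e := a * v')
    (by nlinarith [mul_pos hv hv'])
  refine ⟨t, ht, ?_⟩
  have heq : (1 - t) * (a * v') = ε * (t * v * ((1 - t) * a + t * b)) := by
    linear_combination hroot
  rw [heq, abs_mul, hε, one_mul, abs_mul, abs_of_pos (mul_pos ht.1 hv)]

end EuclideanField

lemma LinearMap.apply_one_mul_eq {F : Type*} [Field F] (T : (F × F) →ₗ[F] (F × F)) (t v : F) :
    T (1, t * v) = (1 - t) • T (1, 0) + t • T (1, v) := by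
  rw [← map_smul, ← map_smul, ← map_add]
  congr 1
  ext <;> simp

/-- Let `F` be a Euclidean field, `v, v' > 0`, and `T : F² → F²` a bijective
linear map taking the line through `(1,0)` into the line through `(1,v')` and
the line through `(1,v)` into the line through `(1,0)`.  Then there is `u` with
`0 < u < v` such that `T(1,u)` has nonzero first component and the speed
`|x₂|/|x₁|` of `(1,u)` equals that of `T(1,u)`, i.e.
`|T(1,u)₂| = u·|T(1,u)₁|`. -/
theorem exists_agreed_speed_vector
    {F : Type*} [Field F] [LinearOrder F] [IsStrictOrderedRing F]
    (hE : ∀ x : F, 0 ≤ x → ∃ y : F, y ^ 2 = x)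
    (v v' : F) (hv : 0 < v) (hv' : 0 < v')
    (T : (F × F) →ₗ[F] (F × F)) (hbij : Function.Bijective T)
    (hT1 : ∀ p : F × F, (∃ q : F, p = q • ((1 : F), (0 : F))) →
      ∃ q' : F, T p = q' • ((1 : F), v'))
    (hT2 : ∀ p : F × F, (∃ q : F, p = q • ((1 : F), v)) →
      ∃ q' : F, T p = q' • ((1 : F), (0 : F))) :
    ∃ u : F, 0 < u ∧ u < v ∧ (T (1, u)).1 ≠ 0 ∧
      |(T (1, u)).2| = u * |(T (1, u)).1| := by
  obtain ⟨a, ha⟩ := hT1 (1, 0) ⟨1, by simp⟩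
  obtain ⟨b, hb⟩ := hT2 (1, v) ⟨1, by simp⟩
  have ha0 : a ≠ 0 := left_ne_zero_of_smul <| ha ▸ (map_ne_zero_iff T hbij.1).2 (by simp)
  have hb0 : b ≠ 0 := left_ne_zero_of_smul <| hb ▸ (map_ne_zero_iff T hbij.1).2 (by simp)
  obtain ⟨t, ⟨ht0, ht1⟩, habs⟩ := exists_abs_eq_mul_abs hE ha0 hb0 hv hv'
  have hTu : T (1, t * v) = ((1 - t) * a + t * b, (1 - t) * (a * v')) := by
    rw [T.apply_one_mul_eq, ha, hb]
    ext <;> simp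
  have hsnd : (1 - t) * (a * v') ≠ 0 := by
    have : 0 < 1 - t := by linarith
    positivity
  refine ⟨t * v, mul_pos ht0 hv, by nlinarith, ?_, ?_⟩ <;> rw [hTu]
  · intro hfst
    rw [show (1 - t) * a + t * b = 0 from hfst, abs_zero, mul_zero, abs_eq_zero] at habs
    exact hsnd habs
  · exact habs
end

section
/- Let F be a linearly ordered field and let Φ : F⁴ → F⁴ be a bijective linear map such that for all x, y ∈ F⁴: (Φ(x))₁ = (Φ(y))₁ if and only if x₁ = y₁. Then there exist q ∈ F with q > 0 and a linear map L : F⁴ → F⁴ satisfying |(L(x))₁| = |x₁| for all x ∈ F⁴, such that Φ(x) = q·L(x) for all x ∈ F⁴. -/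
/-! The time component `x ↦ (Φ x)₀` is a linear functional whose level sets are exactly those of
`x ↦ x₀`, so it equals `c • x₀` for some `c ≠ 0`; then `Φ = |c| • (|c|⁻¹ • Φ)` and the second
factor is time-preserving. -/

namespace LinearMap

variable {K ι : Type*} [DecidableEq ι]

theorem apply_eq_mul_apply_of_depends_only_on [CommSemiring K] (f : (ι → K) →ₗ[K] K) (i : ι)
    (hf : ∀ x y : ι → K, x i = y i → f x = f y) (x : ι → K) :
    f x = f (Pi.single i 1) * x i := by
  have hx : f x = f (x i • Pi.single i 1) := hf _ _ (by simp)
  rw [hx, map_smul, smul_eq_mul, mul_comm]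

theorem exists_ne_zero_apply_eq_mul_apply [CommSemiring K] [Nontrivial K]
    (f : (ι → K) →ₗ[K] K) (i : ι) (hf : ∀ x y : ι → K, f x = f y ↔ x i = y i) :
    ∃ c ≠ 0, ∀ x, f x = c * x i := by
  refine ⟨f (Pi.single i 1), fun hc => ?_,
    apply_eq_mul_apply_of_depends_only_on f i fun x y => (hf x y).mpr⟩
  have h := (hf (Pi.single i 1) 0).mp (by rw [hc, map_zero])
  simp at h

end LinearMap

theorem time_bijective_linear_decomposition_general
    {F : Type*} [Field F] [LinearOrder F] [IsStrictOrderedRing F]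
    (Φ : (Fin 4 → F) →ₗ[F] (Fin 4 → F))
    (htime : ∀ x y : Fin 4 → F, (Φ x) 0 = (Φ y) 0 ↔ x 0 = y 0) :
    ∃ q : F, 0 < q ∧ ∃ L : (Fin 4 → F) →ₗ[F] (Fin 4 → F),
      (∀ x : Fin 4 → F, |(L x) 0| = |x 0|) ∧
      ∀ x : Fin 4 → F, Φ x = q • L x := by
  obtain ⟨c, hc, hΦ⟩ :=
    (LinearMap.proj 0 ∘ₗ Φ).exists_ne_zero_apply_eq_mul_apply 0 htime
  have hc' : |c| ≠ 0 := abs_ne_zero.mpr hc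
  refine ⟨|c|, abs_pos.mpr hc, |c|⁻¹ • Φ, fun x => ?_, fun x => ?_⟩
  · have h0 : (Φ x) 0 = c * x 0 := hΦ x
    rw [LinearMap.smul_apply, Pi.smul_apply, h0, smul_eq_mul, abs_mul, abs_mul, abs_inv, abs_abs,
      inv_mul_cancel_left₀ hc']
  · rw [LinearMap.smul_apply, smul_smul, mul_inv_cancel₀ hc', one_smul]

/-- Let `F` be a linearly ordered field and `Φ : F⁴ → F⁴` a bijective linear
map such that `(Φ x)₁ = (Φ y)₁ ↔ x₁ = y₁` for all `x`, `y`.  Then there are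
`q > 0` and a time-preserving linear map `L : F⁴ → F⁴` (i.e. `|(L x)₁| = |x₁|`
for all `x`) with `Φ(x) = q·L(x)` for all `x`. -/
theorem time_bijective_linear_decomposition
    {F : Type*} [Field F] [LinearOrder F] [IsStrictOrderedRing F]
    (Φ : (Fin 4 → F) →ₗ[F] (Fin 4 → F)) (hbij : Function.Bijective Φ)
    (htime : ∀ x y : Fin 4 → F, (Φ x) 0 = (Φ y) 0 ↔ x 0 = y 0) :
    ∃ q : F, 0 < q ∧ ∃ L : (Fin 4 → F) →ₗ[F] (Fin 4 → F),
      (∀ x : Fin 4 → F, |(L x) 0| = |x 0|) ∧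
      ∀ x : Fin 4 → F, Φ x = q • L x :=
  time_bijective_linear_decomposition_general Φ htime
end
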